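/- Let 𝔏 be a singleton, and on decorated (hence undecorated) rooted trees define insertion τ₁ ▷_ins τ₂ := Σ_τ M(τ₁,τ₂;τ) τ, where M(τ₁,τ₂;τ) counts ways of inserting τ₁ at a node of τ₂; recursively, τ' ▷_ins • = τ' (• the single node) and τ' ▷_ins (• Π_j I(τ_j)) = (simultaneous grafting of τ₁,…,τ_k onto τ') + Σ_j • I(τ' ▷_ins τ_j) Π_{i≠j} I(τ_i). Then the map Ψ (given by Ψ[•] = z_0 and Ψ[• Π I(τ_j)] = k! z_k Π Ψ[τ_j]) satisfies Ψ[τ ▷_ins τ'] = Ψ[τ] ▷ Ψ[τ'], where on polynomials π ▷ π' := Σ_k (1/k!)(D^k π) ∂_{z_k} π' and D = Σ_k (k+1) z_{k+1} ∂_{z_k}. -/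

import Mathlib

/-!
Write `τ' = • Π_{j<n} I(c_j)`, so `Ψ[τ'] = (n! z_n) Π_j Ψ[c_j]`, and let `∂_τ` be the derivation
`z_k ↦ (1/k!) D^k Ψ[τ]`, so that `Ψ[τ] ▷ π = ∂_τ π`. Inserting `τ` into a child `c_j` is the
Leibniz rule for `∂_τ` applied to `Π_j Ψ[c_j]`, and inserting it at the root contributes, by
`∂_τ (n! z_n) = D^n Ψ[τ]`, the remaining term of `∂_τ Ψ[τ']`, provided simultaneous grafting
satisfies `Ψ[ρ_↷(τ₁ ⋆ ⋯ ⋆ τ_m) τ] = Ψ[τ₁]⋯Ψ[τ_m] D^m Ψ[τ]`. That identity holds because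
distributing `τ₁, …, τ_m` among the root and the subtrees of `τ` mirrors distributing the `m`
factors of `D` among the factors of `(n! z_n) Π_j Ψ[c_j]` in the iterated Leibniz rule, with
`D^m (n! z_n) = (n+m)! z_{n+m}` accounting for the trees grafted at the root.
-/

open MvPolynomial

/-- Undecorated plane rooted trees (`𝔏` a singleton, so decorations are dropped). -/
inductive PTree : Type where
  | node : List PTree → PTree

/-- `Ψ[•] = z_0` and `Ψ[• Π_{j=1}^k I(τ_j)] = k! z_k Π_j Ψ[τ_j]`, with values in
`ℝ[z_k : k ∈ ℕ]`. -/
noncomputable def Psi : PTree → MvPolynomial ℕ ℝ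
  | .node ts =>
      (Nat.factorial ts.length) •
        (X ts.length * (ts.attach.map (fun t => Psi t.1)).prod)
decreasing_by
  have := List.sizeOf_lt_of_mem t.2
  simp only [PTree.node.sizeOf_spec]
  omega

/-- All ways of distributing the elements of a list into `m` (ordered) bins. -/
def distribs {α : Type} : List α → ℕ → List (List (List α))
  | [], m => [List.replicate m []]
  | a :: l, m =>
      (distribs l m).flatMap (fun d =>
        (List.range m).map (fun i => d.set i (a :: d.getD i [])))

mutual
/-- Simultaneous grafting: `simGraft [τ₁,…,τ_k] τ'` is the list (with multiplicities) of
all trees obtained by grafting each `τ_i` at some node of `τ'`, i.e.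
`ρ_↷(τ₁ ⋆ ⋯ ⋆ τ_k)τ'` from the Guin–Oudom construction of the grafting pre-Lie
algebra. -/
def simGraft : List PTree → PTree → List PTree
  | τs, .node cs =>
      (distribs τs (cs.length + 1)).flatMap (fun d =>
        (childrenChoices (d.drop 1) cs).map (fun sel => .node ((d.getD 0 []) ++ sel)))

/-- All choices of replacing each child `c_j` by an element of
`simGraft (j-th bin) c_j`. -/
def childrenChoices : List (List PTree) → List PTree → List (List PTree)
  | _, [] => [[]]
  | bins, c :: cs =>
      (simGraft (bins.getD 0 []) c).flatMap (fun c' =>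
        (childrenChoices (bins.drop 1) cs).map (fun rest => c' :: rest))
end

mutual
/-- Insertion `τ' ▷_ins τ` as a list of trees with multiplicities:
`τ' ▷_ins • = τ'` and
`τ' ▷_ins (• Π_j I(τ_j)) = (simultaneous grafting of the `τ_j` onto `τ'`) +
Σ_j • I(τ' ▷_ins τ_j) Π_{i≠j} I(τ_i)`. -/
def ins (τ' : PTree) : PTree → List PTree
  | .node cs => simGraft cs τ' ++ (insAux τ' cs).map .node

def insAux (τ' : PTree) : List PTree → List (List PTree)
  | [] => []
  | c :: cs => ((ins τ' c).map (· :: cs)) ++ ((insAux τ' cs).map (c :: ·))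
end

/-- The insertion pre-Lie product on polynomials,
`π ▷ π' := Σ_k (1/k!)(D^k π) ∂_{z_k} π'` (the sum is effectively finite). -/
noncomputable def triIns (D : MvPolynomial ℕ ℝ →ₗ[ℝ] MvPolynomial ℕ ℝ)
    (π π' : MvPolynomial ℕ ℝ) : MvPolynomial ℕ ℝ :=
  ∑ k ∈ π'.vars,
    ((Nat.factorial k : ℝ))⁻¹ •
      (((D : Module.End ℝ (MvPolynomial ℕ ℝ)) ^ k) π * pderiv k π')

open scoped Nat

theorem MvPolynomial.mkDerivation_apply_eq_sum_vars {R σ : Type*} [CommSemiring R]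
    (f : σ → MvPolynomial σ R) (p : MvPolynomial σ R) :
    mkDerivation R f p = ∑ i ∈ p.vars, f i * pderiv i p := by
  classical
  let δ : Derivation R (MvPolynomial σ R) (MvPolynomial σ R) := ∑ i ∈ p.vars, f i • pderiv i
  have hδ (q : MvPolynomial σ R) : δ q = ∑ i ∈ p.vars, f i * pderiv i q := by
    rw [← Derivation.coeFnAddMonoidHom_apply, map_sum, Finset.sum_apply]
    rfl
  rw [← hδ]
  refine derivation_eq_of_forall_mem_vars fun j hj => ?_
  simp [hδ, pderiv_X, Pi.single_apply, hj]

section Distribs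

variable {α : Type}

theorem length_of_mem_distribs {l : List α} {m : ℕ} {d : List (List α)}
    (h : d ∈ distribs l m) : d.length = m := by
  induction l generalizing d with
  | nil => simp_all [distribs]
  | cons a l ih =>
    simp only [distribs, List.mem_flatMap, List.mem_map, List.mem_range] at h
    obtain ⟨d', hd', i, -, rfl⟩ := h
    simp [ih hd']

theorem perm_flatten_set_cons (a : α) :
    ∀ (d : List (List α)) (i : ℕ), i < d.length →
      (d.set i (a :: d.getD i [])).flatten.Perm (a :: d.flatten)
  | [], _, h => absurd h (Nat.not_lt_zero _)
  | b :: d, 0, _ => List.Perm.refl _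
  | b :: d, i + 1, h => by
    simpa using ((perm_flatten_set_cons a d i (by simpa using h)).append_left b).trans
      List.perm_middle

theorem flatten_perm_of_mem_distribs {l : List α} {m : ℕ} {d : List (List α)}
    (h : d ∈ distribs l m) : d.flatten.Perm l := by
  induction l generalizing d with
  | nil => simp_all [distribs]
  | cons a l ih =>
    simp only [distribs, List.mem_flatMap, List.mem_map, List.mem_range] at h
    obtain ⟨d', hd', i, hi, rfl⟩ := h
    exact (perm_flatten_set_cons a d' i (by rwa [length_of_mem_distribs hd'])).trans
      ((ih hd').cons a)

end Distribs

theorem List.sum_map_flatMap {α β M : Type*} [AddMonoid M] (l : List α) (f : α → List β)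
    (g : β → M) : ((l.flatMap f).map g).sum = (l.map fun a => ((f a).map g).sum).sum := by
  simp [List.flatMap_def, List.sum_flatten, Function.comp_def]

section IteratedLeibniz

variable {R A : Type*} [CommSemiring R] [CommSemiring A] [Algebra R A] (δ : Derivation R A A)

def leibnizTerm {α : Type*} (bins : List (List α)) (qs : List A) : A :=
  (List.zipWith (fun b q => (⇑δ)^[b.length] q) bins qs).prod

theorem leibnizTerm_replicate_nil {α : Type*} (qs : List A) :
    leibnizTerm δ (List.replicate qs.length ([] : List α)) qs = qs.prod := by
  induction qs with
  | nil => rfl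
  | cons q qs ih => simp_all [leibnizTerm, List.replicate_succ]

@[simp]
theorem leibnizTerm_cons {α : Type*} (b : List α) (bins : List (List α)) (q : A) (qs : List A) :
    leibnizTerm δ (b :: bins) (q :: qs) = (⇑δ)^[b.length] q * leibnizTerm δ bins qs :=
  rfl

theorem derivation_leibnizTerm {α : Type*} (a : α) :
    ∀ (bins : List (List α)) (qs : List A), bins.length = qs.length →
      δ (leibnizTerm δ bins qs) =
        ((List.range bins.length).map fun i =>
          leibnizTerm δ (bins.set i (a :: bins.getD i [])) qs).sum
  | [], _, _ => by simp [leibnizTerm]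
  | _ :: _, [], h => absurd h (by simp)
  | b :: bins, q :: qs, h => by
    have ih := derivation_leibnizTerm a bins qs (by simpa using h)
    simp only [leibnizTerm] at ih ⊢
    simp only [List.zipWith_cons_cons, List.prod_cons, Derivation.leibniz, smul_eq_mul,
      List.length_cons, List.range_succ_eq_map, List.map_cons, List.map_map, List.sum_cons,
      Function.comp_def, List.getD_cons_zero, List.set_cons_zero, List.set_cons_succ,
      List.getD_cons_succ, Nat.succ_eq_add_one, ih, List.sum_map_mul_left,
      Function.iterate_succ_apply']
    ring

theorem iterate_derivation_list_prod {α : Type} (l : List α) (qs : List A) :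
    (⇑δ)^[l.length] qs.prod = ((distribs l qs.length).map (leibnizTerm δ · qs)).sum := by
  induction l with
  | nil => simp [distribs, leibnizTerm_replicate_nil]
  | cons a l ih =>
    rw [List.length_cons, Function.iterate_succ_apply', ih, map_list_sum, distribs,
      List.sum_map_flatMap, List.map_map]
    refine congrArg List.sum (List.map_congr_left fun d hd => ?_)
    rw [Function.comp_apply, derivation_leibnizTerm δ a d qs (length_of_mem_distribs hd),
      length_of_mem_distribs hd, List.map_map]
    rfl

end IteratedLeibniz

theorem Psi_node (ts : List PTree) :
    Psi (.node ts) = (ts.length ! : ℝ) • (X ts.length * (ts.map Psi).prod) := by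
  rw [Psi]
  simp [Nat.cast_smul_eq_nsmul]

theorem length_of_mem_childrenChoices {bins : List (List PTree)} {cs sel : List PTree}
    (h : sel ∈ childrenChoices bins cs) : sel.length = cs.length := by
  induction cs generalizing bins sel with
  | nil => simp_all [childrenChoices]
  | cons c cs ih =>
    simp only [childrenChoices, List.mem_flatMap, List.mem_map] at h
    obtain ⟨c', -, rest, hrest, rfl⟩ := h
    simp [ih hrest]

theorem length_of_mem_insAux {τ : PTree} {cs l : List PTree} (h : l ∈ insAux τ cs) :
    l.length = cs.length := by
  induction cs generalizing l with
  | nil => simp [insAux] at h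
  | cons c cs ih =>
    simp only [insAux, List.mem_append, List.mem_map] at h
    rcases h with ⟨t, -, rfl⟩ | ⟨l', hl', rfl⟩
    · simp
    · simp [ih hl']

section PsiDerivation

variable (δ : Derivation ℝ (MvPolynomial ℕ ℝ) (MvPolynomial ℕ ℝ))

theorem iterate_factorial_smul_X (hX : ∀ k : ℕ, δ (X k) = ((k : ℝ) + 1) • X (k + 1))
    (n m : ℕ) : (⇑δ)^[m] ((n ! : ℝ) • X n) = ((n + m)! : ℝ) • X (n + m) := by
  induction m with
  | zero => rfl
  | succ m ih =>
    rw [Function.iterate_succ_apply', ih, Derivation.map_smul, hX, smul_smul, ← add_assoc,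
      Nat.factorial_succ (n + m)]
    push_cast
    ring_nf

mutual

theorem sum_Psi_simGraft (hX : ∀ k : ℕ, δ (X k) = ((k : ℝ) + 1) • X (k + 1))
    (τs : List PTree) :
    ∀ τ : PTree, ((simGraft τs τ).map Psi).sum = (τs.map Psi).prod * (⇑δ)^[τs.length] (Psi τ)
  | .node cs => by
    have hterm : ∀ d ∈ distribs τs (cs.length + 1),
        (((childrenChoices (d.drop 1) cs).map
            fun sel => PTree.node (d.getD 0 [] ++ sel)).map Psi).sum =
          (τs.map Psi).prod *
            leibnizTerm δ d (((cs.length ! : ℝ) • X cs.length) :: cs.map Psi) := by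
      intro d hd
      obtain ⟨b, bs, rfl⟩ : ∃ b bs, d = b :: bs :=
        List.exists_cons_of_length_pos (by rw [length_of_mem_distribs hd]; omega)
      have hbs : bs.length = cs.length := by simpa using length_of_mem_distribs hd
      have hτs :
          (τs.map Psi).prod = (b.map Psi).prod * (bs.map fun b => (b.map Psi).prod).prod := by
        rw [← ((flatten_perm_of_mem_distribs hd).map Psi).prod_eq]
        simp [List.prod_flatten, Function.comp_def]
      have hsel : ∀ sel ∈ childrenChoices bs cs, Psi (.node (b ++ sel)) =
          ((cs.length + b.length)! : ℝ) • (X (cs.length + b.length) * (b.map Psi).prod) *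
            (sel.map Psi).prod := by
        intro sel hsel
        rw [Psi_node, List.length_append, length_of_mem_childrenChoices hsel, add_comm b.length,
          List.map_append, List.prod_append, smul_mul_assoc, mul_assoc]
      simp only [List.getD_cons_zero, List.drop_succ_cons, List.drop_zero, List.map_map,
        Function.comp_def]
      rw [List.map_congr_left hsel, List.sum_map_mul_left,
        sum_prod_Psi_childrenChoices hX bs cs hbs, hτs, leibnizTerm_cons,
        iterate_factorial_smul_X δ hX]
      simp only [smul_eq_C_mul]
      ring
    have hlen : (((cs.length ! : ℝ) • X cs.length) :: cs.map Psi).length = cs.length + 1 := by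
      simp
    rw [simGraft, List.sum_map_flatMap, List.map_congr_left hterm, List.sum_map_mul_left, ← hlen,
      ← iterate_derivation_list_prod, List.prod_cons, smul_mul_assoc, ← Psi_node]

theorem sum_prod_Psi_childrenChoices (hX : ∀ k : ℕ, δ (X k) = ((k : ℝ) + 1) • X (k + 1)) :
    ∀ (bins : List (List PTree)) (cs : List PTree), bins.length = cs.length →
      ((childrenChoices bins cs).map fun sel => (sel.map Psi).prod).sum =
        (bins.map fun b => (b.map Psi).prod).prod * leibnizTerm δ bins (cs.map Psi)
  | [], [], _ => by simp [childrenChoices, leibnizTerm]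
  | [], _ :: _, h | _ :: _, [], h => absurd h (by simp)
  | b :: bins, c :: cs, h => by
    have hrest (c' : PTree) :
        (((childrenChoices bins cs).map (c' :: ·)).map fun sel => (sel.map Psi).prod).sum =
          Psi c' * ((childrenChoices bins cs).map fun sel => (sel.map Psi).prod).sum := by
      simp only [List.map_map, Function.comp_def, List.map_cons, List.prod_cons,
        List.sum_map_mul_left]
    simp only [childrenChoices, List.getD_cons_zero, List.drop_succ_cons, List.drop_zero]
    rw [List.sum_map_flatMap, List.map_congr_left fun c' _ => hrest c', List.sum_map_mul_right,
      sum_Psi_simGraft hX b c, sum_prod_Psi_childrenChoices hX bins cs (by simpa using h)]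
    simp only [List.map_cons, leibnizTerm_cons, List.prod_cons]
    ring

end

/-- The derivation `π ▷ ·`. -/
noncomputable def insDerivation (π : MvPolynomial ℕ ℝ) :
    Derivation ℝ (MvPolynomial ℕ ℝ) (MvPolynomial ℕ ℝ) :=
  mkDerivation ℝ fun k => ((k ! : ℝ))⁻¹ • (⇑δ)^[k] π

theorem triIns_eq_insDerivation (π π' : MvPolynomial ℕ ℝ) :
    triIns δ π π' = insDerivation δ π π' := by
  rw [triIns, insDerivation, mkDerivation_apply_eq_sum_vars]
  refine Finset.sum_congr rfl fun k _ => ?_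
  rw [Module.End.pow_apply, smul_mul_assoc]
  rfl

mutual

theorem sum_Psi_ins (hX : ∀ k : ℕ, δ (X k) = ((k : ℝ) + 1) • X (k + 1)) (τ : PTree) :
    ∀ τ' : PTree, ((ins τ τ').map Psi).sum = insDerivation δ (Psi τ) (Psi τ')
  | .node cs => by
    have hnode : ∀ l ∈ insAux τ cs,
        Psi (.node l) = ((cs.length ! : ℝ) • X cs.length) * (l.map Psi).prod := fun l hl => by
      rw [Psi_node, length_of_mem_insAux hl, smul_mul_assoc]
    have hX_n : insDerivation δ (Psi τ) ((cs.length ! : ℝ) • X cs.length) =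
        (⇑δ)^[cs.length] (Psi τ) := by
      rw [Derivation.map_smul, insDerivation, mkDerivation_X, smul_smul,
        mul_inv_cancel₀ (by positivity), one_smul]
    rw [ins, List.map_append, List.sum_append, sum_Psi_simGraft δ hX, List.map_map,
      Function.comp_def, List.map_congr_left hnode, List.sum_map_mul_left,
      sum_prod_Psi_insAux hX τ cs, Psi_node, ← smul_mul_assoc, Derivation.leibniz, hX_n,
      smul_eq_mul, smul_eq_mul]
    ring

theorem sum_prod_Psi_insAux (hX : ∀ k : ℕ, δ (X k) = ((k : ℝ) + 1) • X (k + 1)) (τ : PTree) :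
    ∀ cs : List PTree, ((insAux τ cs).map fun l => (l.map Psi).prod).sum =
      insDerivation δ (Psi τ) (cs.map Psi).prod
  | [] => by simp [insAux]
  | c :: cs => by
    simp only [insAux, List.map_append, List.sum_append, List.map_map, Function.comp_def,
      List.map_cons, List.prod_cons, List.sum_map_mul_right, List.sum_map_mul_left]
    rw [sum_Psi_ins hX τ c, sum_prod_Psi_insAux hX τ cs, Derivation.leibniz, smul_eq_mul,
      smul_eq_mul]
    ring

end

end PsiDerivation

/-- For `𝔏` a singleton: `Ψ` intertwines the insertion product of rooted trees with the
insertion pre-Lie product `π ▷ π' = Σ_k (1/k!)(D^k π) ∂_{z_k} π'` on polynomials, where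
`D = Σ_k (k+1) z_{k+1} ∂_{z_k}`: `Ψ[τ ▷_ins τ'] = Ψ[τ] ▷ Ψ[τ']`. -/
theorem Psi_insertion_preLie_morphism
    (D : MvPolynomial ℕ ℝ →ₗ[ℝ] MvPolynomial ℕ ℝ)
    (hLeib : ∀ p q : MvPolynomial ℕ ℝ, D (p * q) = D p * q + p * D q)
    (hgen : ∀ k : ℕ, D (X k) = ((k : ℝ) + 1) • X (k + 1)) :
    ∀ τ τ' : PTree, ((ins τ τ').map Psi).sum = triIns D (Psi τ) (Psi τ') := by
  intro τ τ'
  let δ := Derivation.mk' D fun p q => by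
    rw [hLeib, smul_eq_mul, smul_eq_mul]; ring
  exact (sum_Psi_ins δ hgen τ τ').trans (triIns_eq_insDerivation δ _ _).symm
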